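/- arXiv:2512.10134 — 4 statements merged into one kernel-verified Lean document; each statement's English description precedes it below -/
import Mathlib

section
/- Let G be a graph with maximum degree at most Δ ≥ 1. For any vertex v of G and any m ≥ 1, the number of connected induced subgraphs of G of order m containing v is at most (mΔ)^{m−1}/m!. -/
/-!
Listing `v` first, each connected `m`-set containing `v` has `(m-1)!` enumerations
`f : Fin m ↪ V`. Such an `f` is determined by a parent map `π` of a spanning tree of its image,
pulled back to `Fin m` and rooted at `0`, together with the position of `f x` among the at most
`Δ` neighbours of `f (π x)` for each `x ≠ 0`. Joyal's encoding of a rooted tree with a marked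
vertex as a self-map of `Fin m` fixing the root bounds the number `T` of parent maps by
`m * T ≤ m ^ (m-1)`. Hence `N * (m-1)! * m ≤ m ^ (m-1) * Δ ^ (m-1)`.
-/

open Function Finset

theorem Set.MapsTo.mem_of_mem_periodicPts {α : Type*} {f : α → α} {s : Set α} {x : α}
    (hs : Set.MapsTo f s s) (hx : x ∈ periodicPts f) {k : ℕ} (hk : f^[k] x ∈ s) : x ∈ s := by
  obtain ⟨n, hn, hper⟩ := mem_periodicPts.1 hx
  rw [← (hper.mul_const k).eq, ← Nat.sub_add_cancel (Nat.le_mul_of_pos_left k hn),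
    iterate_add_apply]
  exact hs.iterate _ hk

section ParentMap

variable {α : Type*}

/-- Rooted trees on `α`, encoded by their parent maps. -/
def IsParentMap (π : α → α) (r : α) : Prop :=
  π r = r ∧ ∀ x, ∃ n, π^[n] x = r

noncomputable def depthToRoot (π : α → α) (r x : α) : ℕ :=
  sInf {n | π^[n] x = r}

variable {π π' : α → α} {r j j' x : α}

theorem IsParentMap.of_measure_lt (hr : π r = r) (μ : α → ℕ)
    (hμ : ∀ x, x ≠ r → μ (π x) < μ x) : IsParentMap π r := by
  refine ⟨hr, fun x => ?_⟩
  induction hx : μ x using Nat.strong_induction_on generalizing x with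
  | _ d ih =>
    by_cases hxr : x = r
    · exact ⟨0, hxr⟩
    · obtain ⟨n, hn⟩ := ih _ (hx ▸ hμ x hxr) (π x) rfl
      exact ⟨n + 1, hn⟩

theorem IsParentMap.induction (hπ : IsParentMap π r) {p : α → Prop} (root : p r)
    (step : ∀ x, x ≠ r → p (π x) → p x) (x : α) : p x := by
  obtain ⟨n, hn⟩ := hπ.2 x
  induction n generalizing x with
  | zero =>
    obtain rfl : x = r := hn
    exact root
  | succ n ih =>
    by_cases hxr : x = r
    · exact hxr ▸ root
    · exact step x hxr (ih _ hn)

theorem IsParentMap.iterate_depthToRoot (hπ : IsParentMap π r) (x : α) :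
    π^[depthToRoot π r x] x = r :=
  Nat.sInf_mem (hπ.2 x)

theorem iterate_ne_of_lt_depthToRoot {k : ℕ} (hk : k < depthToRoot π r x) : π^[k] x ≠ r :=
  Nat.notMem_of_lt_sInf hk

theorem IsParentMap.injOn_iterate (hπ : IsParentMap π r) (x : α) :
    Set.InjOn (π^[·] x) (Set.Iio (depthToRoot π r x)) := by
  have key : ∀ a b, a < b → b < depthToRoot π r x → π^[a] x ≠ π^[b] x := by
    intro a b hab hb h
    apply iterate_ne_of_lt_depthToRoot (π := π) (r := r) (x := x)
      (k := depthToRoot π r x - b + a) (by omega)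
    rw [iterate_add_apply, h, ← iterate_add_apply, Nat.sub_add_cancel hb.le,
      hπ.iterate_depthToRoot]
  intro a ha b hb h
  rcases lt_trichotomy a b with hab | rfl | hab
  · exact absurd h (key a b hab hb)
  · rfl
  · exact absurd h.symm (key b a hab ha)

variable [DecidableEq α]

noncomputable def pathToRoot (π : α → α) (r x : α) : Finset α :=
  (range (depthToRoot π r x)).image (π^[·] x)

theorem mem_pathToRoot {y : α} :
    y ∈ pathToRoot π r x ↔ ∃ k < depthToRoot π r x, π^[k] x = y := by
  simp [pathToRoot]

theorem root_notMem_pathToRoot : r ∉ pathToRoot π r x := fun h => by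
  obtain ⟨k, hk, hkr⟩ := mem_pathToRoot.1 h
  exact iterate_ne_of_lt_depthToRoot hk hkr

theorem IsParentMap.card_pathToRoot (hπ : IsParentMap π r) (x : α) :
    #(pathToRoot π r x) = depthToRoot π r x := by
  rw [pathToRoot, card_image_of_injOn (by simpa using hπ.injOn_iterate x), card_range]

/-- A numbering of `P` by `0, …, #P - 1`; what matters is that it depends on the set `P` only. -/
noncomputable def finsetIndex (P : Finset α) (x : α) : ℕ :=
  if hx : x ∈ P then P.equivFin ⟨x, hx⟩ else 0

section finsetIndex

variable {P : Finset α}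

theorem finsetIndex_lt (hx : x ∈ P) : finsetIndex P x < #P := by
  simp [finsetIndex, hx]

theorem injOn_finsetIndex : Set.InjOn (finsetIndex P) P := by
  intro x hx y hy h
  simp only [finsetIndex, mem_coe.1 hx, mem_coe.1 hy, dite_true, Fin.val_inj] at h
  simpa using P.equivFin.injective h

theorem exists_finsetIndex_eq {k : ℕ} (hk : k < #P) : ∃ x ∈ P, finsetIndex P x = k :=
  ⟨P.equivFin.symm ⟨k, hk⟩, coe_mem _, by simp [finsetIndex]⟩

end finsetIndex

/-- Joyal's encoding of the tree `π` with the marked vertex `j`: on the path `P` from `j` to the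
root, `π` is replaced by the permutation of `P` sending its `k`-th element (for `finsetIndex P`)
to `π^[k] j`. The path is then recovered as the set of periodic points. -/
noncomputable def joyalCode (π : α → α) (r j x : α) : α :=
  if x ∈ pathToRoot π r j then π^[finsetIndex (pathToRoot π r j) x] j else π x

theorem joyalCode_of_mem (hx : x ∈ pathToRoot π r j) :
    joyalCode π r j x = π^[finsetIndex (pathToRoot π r j) x] j := if_pos hx

theorem joyalCode_of_notMem (hx : x ∉ pathToRoot π r j) : joyalCode π r j x = π x :=
  if_neg hx

namespace IsParentMap

theorem joyalCode_root (hπ : IsParentMap π r) : joyalCode π r j r = r :=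
  (joyalCode_of_notMem root_notMem_pathToRoot).trans hπ.1

theorem mapsTo_joyalCode (hπ : IsParentMap π r) :
    Set.MapsTo (joyalCode π r j) (pathToRoot π r j) (pathToRoot π r j) :=
  fun _ hx => mem_pathToRoot.2
    ⟨_, hπ.card_pathToRoot j ▸ finsetIndex_lt hx, (joyalCode_of_mem hx).symm⟩

theorem injOn_joyalCode (hπ : IsParentMap π r) :
    Set.InjOn (joyalCode π r j) (pathToRoot π r j) := by
  intro x hx y hy h
  rw [joyalCode_of_mem hx, joyalCode_of_mem hy] at h
  refine injOn_finsetIndex hx hy (hπ.injOn_iterate j ?_ ?_ h) <;>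
    simp only [Set.mem_Iio, ← hπ.card_pathToRoot j] <;> exact finsetIndex_lt ‹_›

theorem mem_periodicPts_joyalCode (hπ : IsParentMap π r) :
    x ∈ periodicPts (joyalCode π r j) ↔ x = r ∨ x ∈ pathToRoot π r j := by
  set Q : Set α := {y | y = r ∨ y ∈ pathToRoot π r j}
  have hQ : Set.MapsTo (joyalCode π r j) Q Q := by
    rintro y (rfl | hy)
    · exact Or.inl hπ.joyalCode_root
    · exact Or.inr (hπ.mapsTo_joyalCode hy)
  constructor
  · intro hx
    by_contra hxQ
    have hout : ∀ k, (joyalCode π r j)^[k] x ∉ Q := fun k hk =>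
      hxQ (hQ.mem_of_mem_periodicPts hx hk)
    -- so the orbit of `x` follows `π`, which leads to the root
    have hagree : ∀ k, (joyalCode π r j)^[k] x = π^[k] x := by
      intro k
      induction k with
      | zero => rfl
      | succ k ih =>
        rw [iterate_succ_apply', iterate_succ_apply', ← ih,
          joyalCode_of_notMem fun h => hout k (Or.inr h)]
    obtain ⟨k, hk⟩ := hπ.2 x
    exact hout k (Or.inl ((hagree k).trans hk))
  · rintro (rfl | hx)
    · exact mem_periodicPts.2 ⟨1, one_pos, hπ.joyalCode_root⟩
    · have hper :=
        (hπ.mapsTo_joyalCode.restrict_inj.2 hπ.injOn_joyalCode).mem_periodicPts ⟨x, hx⟩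
      obtain ⟨n, hn, hxn⟩ := mem_periodicPts.1 hper
      exact mem_periodicPts.2 ⟨n, hn, hxn.map (g := Subtype.val) fun _ => rfl⟩

theorem eq_of_joyalCode_eq (hπ : IsParentMap π r) (hπ' : IsParentMap π' r)
    (h : joyalCode π r j = joyalCode π' r j') : π = π' ∧ j = j' := by
  have hP : pathToRoot π r j = pathToRoot π' r j' := by
    ext x
    have hx := (hπ.mem_periodicPts_joyalCode (j := j) (x := x)).symm.trans
      (h ▸ hπ'.mem_periodicPts_joyalCode (j := j') (x := x))
    rcases eq_or_ne x r with rfl | hxr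
    · simp only [root_notMem_pathToRoot]
    · simpa [hxr] using hx
  have hiter : ∀ k ≤ depthToRoot π r j, π^[k] j = π'^[k] j' := by
    intro k hk
    rcases hk.lt_or_eq with hk | rfl
    · rw [← hπ.card_pathToRoot] at hk
      obtain ⟨x, hx, rfl⟩ := exists_finsetIndex_eq hk
      rw [← joyalCode_of_mem hx, h, joyalCode_of_mem (hP ▸ hx), hP]
    · rw [hπ.iterate_depthToRoot, ← hπ.card_pathToRoot, hP, hπ'.card_pathToRoot,
        hπ'.iterate_depthToRoot]
  refine ⟨funext fun x => ?_, hiter 0 (Nat.zero_le _)⟩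
  by_cases hx : x ∈ pathToRoot π r j
  · obtain ⟨k, hk, rfl⟩ := mem_pathToRoot.1 hx
    simpa only [iterate_succ_apply', ← hiter k hk.le] using hiter (k + 1) hk
  · rw [← joyalCode_of_notMem hx, h, joyalCode_of_notMem (hP ▸ hx)]

end IsParentMap

theorem card_isParentMap_mul_card_le [Fintype α] (r : α) :
    Nat.card {π : α → α // IsParentMap π r} * Nat.card α ≤ Nat.card α ^ (Nat.card α - 1) := by
  let encode : {π : α → α // IsParentMap π r} × α → ({x // x ≠ r} → α) :=
    fun p x => joyalCode p.1.1 r p.2 x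
  have hinj : Injective encode := by
    rintro ⟨⟨π, hπ⟩, j⟩ ⟨⟨π', hπ'⟩, j'⟩ h
    have h' : joyalCode π r j = joyalCode π' r j' := funext fun x => by
      rcases eq_or_ne x r with rfl | hx
      · rw [hπ.joyalCode_root, hπ'.joyalCode_root]
      · exact congrFun h ⟨x, hx⟩
    obtain ⟨rfl, rfl⟩ := hπ.eq_of_joyalCode_eq hπ' h'
    rfl
  simpa [Nat.card_prod, Nat.card_fun] using Nat.card_le_card_of_injective encode hinj

end ParentMap

namespace SimpleGraph

variable {α V : Type*}

theorem Connected.exists_isParentMap {H : SimpleGraph α} (hH : H.Connected) (r : α) :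
    ∃ π : α → α, IsParentMap π r ∧ ∀ x, x ≠ r → H.Adj (π x) x := by
  classical
  have hstep : ∀ x, x ≠ r → ∃ y, H.Adj y x ∧ H.dist y r < H.dist x r := by
    intro x hx
    obtain ⟨p, hp⟩ := (hH.preconnected x r).exists_walk_length_eq_dist
    cases p with
    | nil => exact absurd rfl hx
    | cons hxy q =>
      rw [Walk.length_cons] at hp
      exact ⟨_, hxy.symm, (dist_le q).trans_lt (by omega)⟩
  choose! p hp using hstep
  refine ⟨update p r r, .of_measure_lt (by simp) (H.dist · r) fun x hx => ?_, fun x hx => ?_⟩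
  · simpa [hx] using (hp x hx).2
  · simpa [hx] using (hp x hx).1

variable (G : SimpleGraph V)

theorem connected_comap_iff_induce_range {f : α → V} (hf : Injective f) :
    (G.comap f).Connected ↔ (G.induce (Set.range f)).Connected :=
  (Embedding.comap ⟨f, hf⟩ G).isoInduceRange.connected_iff

def connectedEnumerations (r : α) (v : V) : Set (α → V) :=
  {f | Injective f ∧ f r = v ∧ (G.induce (Set.range f)).Connected}

theorem card_connectedEnumerations_le [Fintype α] [Fintype V] {Δ : ℕ}
    (hdeg : ∀ u, (G.neighborSet u).ncard ≤ Δ) (r : α) (v : V) :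
    Nat.card (G.connectedEnumerations r v) ≤
      Nat.card {π : α → α // IsParentMap π r} * Δ ^ (Nat.card α - 1) := by
  classical
  have emb (u : V) : G.neighborSet u ↪ Fin Δ :=
    (Function.Embedding.nonempty_of_card_le
      (by simpa [← Nat.card_eq_fintype_card, Nat.card_fin] using hdeg u)).some
  have htree (f : G.connectedEnumerations r v) :
      ∃ π, IsParentMap π r ∧ ∀ x, x ≠ r → G.Adj (f.1 (π x)) (f.1 x) :=
    ((G.connected_comap_iff_induce_range f.2.1).2 f.2.2.2).exists_isParentMap r
  choose π hπ hadj using htree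
  let encode (f : G.connectedEnumerations r v) :
      {π : α → α // IsParentMap π r} × ({x // x ≠ r} → Fin Δ) :=
    (⟨π f, hπ f⟩, fun x => emb _ ⟨f.1 x, hadj f x x.2⟩)
  have label_inj {u u' : V} (a : G.neighborSet u) (b : G.neighborSet u') (hu : u = u')
      (h : emb u a = emb u' b) : (a : V) = b := by
    subst hu
    exact congrArg Subtype.val ((emb u).injective h)
  have hinj : Injective encode := by
    intro f g hfg
    simp only [encode, Prod.mk.injEq, Subtype.mk.injEq, funext_iff] at hfg
    obtain ⟨hπfg, hlab⟩ := hfg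
    refine Subtype.ext <| funext <|
      (hπ f).induction (f.2.2.1.trans g.2.2.1.symm) fun x hx hpx => ?_
    exact label_inj _ _ (hpx.trans (by rw [hπfg])) (hlab ⟨x, hx⟩)
  simpa [Nat.card_prod, Nat.card_fun] using Nat.card_le_card_of_injective encode hinj

section

variable [DecidableEq V] {v : V} {S : Finset V} {n : ℕ} (e : Fin n ≃ S.erase v)

theorem range_cons_erase (hv : v ∈ S) :
    Set.range (Fin.cons v (fun i => (e i : V)) : Fin (n + 1) → V) = S := by
  rw [Fin.range_cons, show (fun i => (e i : V)) = Subtype.val ∘ e from rfl,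
    e.surjective.range_comp, Subtype.range_coe, coe_erase, Set.insert_sdiff_singleton,
    Set.insert_eq_of_mem hv]

theorem cons_erase_mem_connectedEnumerations (hv : v ∈ S)
    (hS : (G.induce (S : Set V)).Connected) :
    Fin.cons v (fun i => (e i : V)) ∈ G.connectedEnumerations (0 : Fin (n + 1)) v := by
  refine ⟨Fin.cons_injective_iff.2 ⟨?_, Subtype.val_injective.comp e.injective⟩, rfl, ?_⟩
  · rintro ⟨i, hi⟩
    exact (mem_erase.1 (e i).2).1 hi
  · rwa [range_cons_erase e hv]

end

theorem ncard_mul_factorial_le_card_connectedEnumerations [Fintype V] (v : V) (n : ℕ) :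
    {S : Finset V | v ∈ S ∧ S.card = n + 1 ∧ (G.induce (S : Set V)).Connected}.ncard *
      n.factorial ≤ Nat.card (G.connectedEnumerations (0 : Fin (n + 1)) v) := by
  classical
  set 𝒮 := {S : Finset V | v ∈ S ∧ S.card = n + 1 ∧ (G.induce (S : Set V)).Connected}
  let e (S : 𝒮) : Fin n ≃ S.1.erase v :=
    ((S.1.erase v).equivFinOfCardEq (by rw [card_erase_of_mem S.2.1, S.2.2.1]; rfl)).symm
  let enum (p : 𝒮 × Equiv.Perm (Fin n)) : G.connectedEnumerations (0 : Fin (n + 1)) v :=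
    ⟨_, G.cons_erase_mem_connectedEnumerations (p.2.trans (e p.1)) p.1.2.1 p.1.2.2.2⟩
  have hinj : Injective enum := by
    rintro ⟨S, σ⟩ ⟨S', σ'⟩ h
    have h' := congrArg Subtype.val h
    obtain rfl : S = S' := Subtype.ext <| coe_injective <| by
      rw [← range_cons_erase _ S.2.1, ← range_cons_erase _ S'.2.1]
      exact congrArg Set.range h'
    have hσ := funext_iff.1 (Fin.cons_right_injective (α := fun _ => V) v h')
    congr
    exact Equiv.ext fun i => (e S).injective (Subtype.val_injective (hσ i))
  have := Nat.card_le_card_of_injective enum hinj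
  rwa [Nat.card_prod, Nat.card_perm, Nat.card_fin, Nat.card_coe_set_eq] at this

end SimpleGraph

theorem card_connected_induced_subgraphs_le_general
    {V : Type*} [Fintype V] (G : SimpleGraph V) (Δ : ℕ)
    (hdeg : ∀ u, (G.neighborSet u).ncard ≤ Δ)
    (v : V) (m : ℕ) :
    (({S : Finset V | v ∈ S ∧ S.card = m ∧ (G.induce (↑S : Set V)).Connected}.ncard : ℝ)) ≤
      ((m : ℝ) * Δ) ^ (m - 1) / m.factorial := by
  rcases m with _ | n
  · have hempty :
        {S : Finset V | v ∈ S ∧ S.card = 0 ∧ (G.induce (↑S : Set V)).Connected} = ∅ :=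
      Set.eq_empty_of_forall_notMem fun S ⟨hv, hS, _⟩ => by simp_all
    rw [hempty, Set.ncard_empty]
    simp
  set N := {S : Finset V | v ∈ S ∧ S.card = n + 1 ∧ (G.induce (↑S : Set V)).Connected}.ncard
  have hE := G.card_connectedEnumerations_le hdeg (0 : Fin (n + 1)) v
  have hT := card_isParentMap_mul_card_le (0 : Fin (n + 1))
  simp only [Nat.card_fin, add_tsub_cancel_right] at hE hT
  have key : N * (n + 1).factorial ≤ ((n + 1) * Δ) ^ n :=
    calc N * (n + 1).factorial = N * n.factorial * (n + 1) := by
          rw [Nat.factorial_succ]; ring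
      _ ≤ Nat.card (G.connectedEnumerations (0 : Fin (n + 1)) v) * (n + 1) := by
          gcongr; exact G.ncard_mul_factorial_le_card_connectedEnumerations v n
      _ ≤ Nat.card {π : Fin (n + 1) → Fin (n + 1) // IsParentMap π 0} * (n + 1) * Δ ^ n := by
          rw [mul_right_comm]; gcongr
      _ ≤ ((n + 1) * Δ) ^ n := by rw [mul_pow]; gcongr
  rw [le_div_iff₀ (by positivity)]
  exact_mod_cast key

/-- Let `G` be a finite simple graph with maximum degree at most `Δ ≥ 1`. For any
vertex `v` and any `m ≥ 1`, the number of connected induced subgraphs of `G` of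
order `m` containing `v` is at most `(mΔ)^{m-1}/m!`. -/
theorem card_connected_induced_subgraphs_le
    {V : Type*} [Fintype V] (G : SimpleGraph V) (Δ : ℕ) (hΔ : 1 ≤ Δ)
    (hdeg : ∀ u, (G.neighborSet u).ncard ≤ Δ)
    (v : V) (m : ℕ) (hm : 1 ≤ m) :
    (({S : Finset V | v ∈ S ∧ S.card = m ∧ (G.induce (↑S : Set V)).Connected}.ncard : ℝ)) ≤
      ((m : ℝ) * Δ) ^ (m - 1) / m.factorial :=
  card_connected_induced_subgraphs_le_general G Δ hdeg v m
end

section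
/- Let {E_v}_{v∈V(G)} be events with strong dependency graph G having chromatic number χ, and suppose Pr[complement of E_v] ≤ p for all v. Then for every subset S ⊆ V(G) inducing a connected subgraph of G, Pr[⋂_{v∈S} complement of E_v] ≤ p^{|S|/χ}. -/
/-!
Colour `G` properly with `χ` colours. Some colour class `T` contains at least `|S| / χ` of the
vertices of `S`; it is an independent set of `G`, so the events `E_vᶜ`, `v ∈ T`, are mutually
independent, and hence `Pr[⋂_{v ∈ S} E_vᶜ] ≤ Pr[⋂_{v ∈ T} E_vᶜ] = ∏_{v ∈ T} Pr[E_vᶜ] ≤ p^{|T|}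
≤ p^{|S|/χ}` when `p ≤ 1` (for `p > 1` the bound is trivial).
-/

open MeasureTheory ProbabilityTheory Finset

namespace SimpleGraph

variable {Ω V : Type*} [MeasurableSpace Ω]

def IsStrongDependencyGraph (G : SimpleGraph V) (μ : Measure Ω) (E : V → Set Ω) : Prop :=
  ∀ A B : Set V, Disjoint A B → (∀ a ∈ A, ∀ b ∈ B, ¬ G.Adj a b) →
    Indep (MeasurableSpace.generateFrom (E '' A)) (MeasurableSpace.generateFrom (E '' B)) μ

theorem IsStrongDependencyGraph.measure_biInter_compl_of_isIndepSet {G : SimpleGraph V}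
    {μ : Measure Ω} [IsProbabilityMeasure μ] {E : V → Set Ω}
    (hG : G.IsStrongDependencyGraph μ E) {T : Finset V} (hT : G.IsIndepSet T) :
    μ (⋂ v ∈ T, (E v)ᶜ) = ∏ v ∈ T, μ (E v)ᶜ := by
  classical
  induction T using Finset.cons_induction with
  | empty => simp
  | cons a T ha ih =>
    have hT' : G.IsIndepSet T := hT.mono (by simp)
    have hindep := hG {a} T (by simpa using ha) fun x hx b hb ↦ by
      rw [Set.mem_singleton_iff.mp hx]
      exact hT (by simp) (by simp [hb]) (ne_of_mem_of_not_mem hb ha).symm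
    have hmeas_a : MeasurableSet[MeasurableSpace.generateFrom (E '' {a})] (E a)ᶜ :=
      (MeasurableSpace.measurableSet_generateFrom (by simp)).compl
    have hmeas_T : MeasurableSet[MeasurableSpace.generateFrom (E '' T)] (⋂ v ∈ T, (E v)ᶜ) :=
      .biInter T.countable_toSet fun v hv ↦
        (MeasurableSpace.measurableSet_generateFrom (Set.mem_image_of_mem E hv)).compl
    rw [cons_eq_insert, set_biInter_insert, prod_insert ha, ← ih hT']
    exact (Indep_iff _ _ μ).mp hindep _ _ hmeas_a hmeas_T

theorem Colorable.exists_isIndepSet_subset_card_ge {G : SimpleGraph V} {n : ℕ}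
    (hG : G.Colorable n) (hn : 0 < n) (S : Finset V) :
    ∃ T ⊆ S, G.IsIndepSet T ∧ (#S : ℝ) / n ≤ #T := by
  classical
  obtain ⟨C⟩ := hG
  obtain ⟨i, -, hi⟩ := exists_le_card_fiber_of_nsmul_le_card_of_maps_to
    (s := S) (f := C) (b := (#S : ℝ) / n) (fun _ _ ↦ mem_univ _) ⟨⟨0, hn⟩, mem_univ _⟩
    (by rw [card_univ, Fintype.card_fin, nsmul_eq_mul, mul_div_cancel₀ _ (by positivity)])
  refine ⟨{v ∈ S | C v = i}, filter_subset _ _, fun v hv w hw _ ↦ ?_, hi⟩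
  simp only [coe_filter, Set.mem_ofPred_eq] at hv hw
  exact C.not_adj_of_mem_colorClass hv.2 hw.2

end SimpleGraph

open SimpleGraph

theorem prob_inter_compl_le_of_strong_dependency_graph_general
    {Ω V : Type*} [MeasurableSpace Ω]
    (μ : Measure Ω) [IsProbabilityMeasure μ]
    (G : SimpleGraph V) (E : V → Set Ω)
    (hdep : ∀ A B : Set V, Disjoint A B → (∀ a ∈ A, ∀ b ∈ B, ¬ G.Adj a b) →
      ProbabilityTheory.Indep (MeasurableSpace.generateFrom (E '' A))
        (MeasurableSpace.generateFrom (E '' B)) μ)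
    (χ : ℕ) (hχ : 0 < χ) (hχG : G.chromaticNumber = (χ : ℕ∞))
    (p : ℝ) (hp0 : 0 ≤ p) (hp : ∀ v, (μ ((E v)ᶜ)).toReal ≤ p)
    (S : Finset V) :
    (μ (⋂ v ∈ S, (E v)ᶜ)).toReal ≤ p ^ ((S.card : ℝ) / χ) := by
  rcases lt_or_ge 1 p with hp1 | hp1
  · exact measureReal_le_one.trans (Real.one_le_rpow hp1.le (by positivity))
  obtain ⟨T, hTS, hT, hST⟩ :=
    (chromaticNumber_le_iff_colorable.mp hχG.le).exists_isIndepSet_subset_card_ge hχ S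
  calc (μ (⋂ v ∈ S, (E v)ᶜ)).toReal
      ≤ (μ (⋂ v ∈ T, (E v)ᶜ)).toReal := measureReal_mono (Set.biInter_subset_biInter_left hTS)
    _ = ∏ v ∈ T, (μ (E v)ᶜ).toReal := by
      rw [IsStrongDependencyGraph.measure_biInter_compl_of_isIndepSet hdep hT,
        ENNReal.toReal_prod]
    _ ≤ ∏ _v ∈ T, p := prod_le_prod (fun _ _ ↦ ENNReal.toReal_nonneg) fun v _ ↦ hp v
    _ = p ^ #T := prod_const p
    _ = p ^ (#T : ℝ) := (Real.rpow_natCast p _).symm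
    _ ≤ p ^ ((#S : ℝ) / χ) := Real.rpow_le_rpow_of_exponent_ge' hp0 hp1 (by positivity) hST

/-- Let `{E_v}` be events with strong dependency graph `G` having chromatic number
`χ`, and suppose `Pr[E_vᶜ] ≤ p` for all `v`. Then for every subset `S` of vertices
inducing a connected subgraph of `G`, `Pr[⋂_{v ∈ S} E_vᶜ] ≤ p^{|S|/χ}`. -/
theorem prob_inter_compl_le_of_strong_dependency_graph
    {Ω V : Type*} [Fintype V] [MeasurableSpace Ω]
    (μ : Measure Ω) [IsProbabilityMeasure μ]
    (G : SimpleGraph V) (E : V → Set Ω) (hE : ∀ v, MeasurableSet (E v))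
    (hdep : ∀ A B : Set V, Disjoint A B → (∀ a ∈ A, ∀ b ∈ B, ¬ G.Adj a b) →
      ProbabilityTheory.Indep (MeasurableSpace.generateFrom (E '' A))
        (MeasurableSpace.generateFrom (E '' B)) μ)
    (χ : ℕ) (hχ : 0 < χ) (hχG : G.chromaticNumber = (χ : ℕ∞))
    (p : ℝ) (hp0 : 0 ≤ p) (hp : ∀ v, (μ ((E v)ᶜ)).toReal ≤ p)
    (S : Finset V) (hS : (G.induce (↑S : Set V)).Connected) :
    (μ (⋂ v ∈ S, (E v)ᶜ)).toReal ≤ p ^ ((S.card : ℝ) / χ) :=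
  prob_inter_compl_le_of_strong_dependency_graph_general μ G E hdep χ hχ hχG p hp0 hp S
end

section
/- Let Π_0 and Π_⋆ be operators on a finite-dimensional Hilbert space with Π_0 an orthogonal projector, Π_⋆ Π_0 = Π_0, and ‖Π_⋆(I − Π_0)‖ ≤ q for some 0 ≤ q ≤ 1, where ‖·‖ is the operator norm and ‖Π_⋆‖ ≤ 1. Then for every positive integer T, |tr(Π_⋆^T) − tr(Π_0)| ≤ q^T · rank(I − Π_0). -/
/-!
A contraction fixing a vector has an adjoint fixing it too, so `Ps P0 = P0` forces `P0 Ps = P0`.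
Hence `(Ps - P0)^T = Ps^T - P0`, whose norm is at most `‖Ps (1 - P0)‖^T ≤ q^T`, and whose range
lies in that of `1 - P0`. The trace of an operator whose range lies in a subspace `K` is a sum of
`dim K` diagonal entries in an orthonormal basis of `K`, each bounded by the operator norm.
-/

open scoped InnerProductSpace

section
variable {𝕜 E : Type*} [RCLike 𝕜] [NormedAddCommGroup E] [InnerProductSpace 𝕜 E]

theorem LinearMap.norm_trace_le_of_norm_apply_le [FiniteDimensional 𝕜 E] (T : E →ₗ[𝕜] E)
    {C : ℝ} (hT : ∀ x, ‖T x‖ ≤ C * ‖x‖) :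
    ‖T.trace 𝕜 E‖ ≤ C * Module.finrank 𝕜 E := by
  set b := stdOrthonormalBasis 𝕜 E
  have hterm (i) : ‖⟪b i, T (b i)⟫_𝕜‖ ≤ C := by
    calc ‖⟪b i, T (b i)⟫_𝕜‖ ≤ ‖b i‖ * ‖T (b i)‖ := norm_inner_le_norm _ _
      _ ≤ 1 * (C * 1) := by rw [b.norm_eq_one]; gcongr; simpa [b.norm_eq_one] using hT (b i)
      _ = C := by ring
  calc ‖T.trace 𝕜 E‖ = ‖∑ i, ⟪b i, T (b i)⟫_𝕜‖ := by rw [T.trace_eq_sum_inner b]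
    _ ≤ ∑ i, ‖⟪b i, T (b i)⟫_𝕜‖ := norm_sum_le _ _
    _ ≤ ∑ _i, C := Finset.sum_le_sum fun i _ => hterm i
    _ = C * Module.finrank 𝕜 E := by simp [mul_comm]

theorem ContinuousLinearMap.norm_trace_le_of_range_le [FiniteDimensional 𝕜 E] (M : E →L[𝕜] E)
    {K : Submodule 𝕜 E} (hM : LinearMap.range (M : E →ₗ[𝕜] E) ≤ K) :
    ‖LinearMap.trace 𝕜 E (M : E →ₗ[𝕜] E)‖ ≤ ‖M‖ * Module.finrank 𝕜 K := by
  set f := (M : E →ₗ[𝕜] E).codRestrict K fun x => hM ⟨x, rfl⟩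
  have htrace : LinearMap.trace 𝕜 E (M : E →ₗ[𝕜] E) = LinearMap.trace 𝕜 K (f ∘ₗ K.subtype) := by
    rw [← LinearMap.trace_comp_comm']
    rfl
  rw [htrace]
  exact LinearMap.norm_trace_le_of_norm_apply_le _ fun x => M.le_opNorm x

theorem ContinuousLinearMap.adjoint_apply_eq_of_norm_le_one [CompleteSpace E] {A : E →L[𝕜] E}
    (hA : ‖A‖ ≤ 1) {y : E} (hy : A y = y) : A.adjoint y = y := by
  have hinner : RCLike.re ⟪A.adjoint y, y⟫_𝕜 = ‖y‖ ^ 2 := by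
    rw [adjoint_inner_left, hy, inner_self_eq_norm_sq]
  have hle : ‖A.adjoint y‖ ≤ ‖y‖ := by
    calc ‖A.adjoint y‖ ≤ ‖A.adjoint‖ * ‖y‖ := A.adjoint.le_opNorm y
      _ ≤ 1 * ‖y‖ := by rw [LinearIsometryEquiv.norm_map]; gcongr
      _ = ‖y‖ := one_mul _
  have hsq : ‖A.adjoint y - y‖ ^ 2 ≤ 0 := by
    rw [@norm_sub_sq 𝕜, hinner]
    nlinarith [norm_nonneg (A.adjoint y)]
  rw [← sub_eq_zero, ← norm_eq_zero]
  nlinarith [norm_nonneg (A.adjoint y - y)]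

theorem ContinuousLinearMap.mul_eq_self_of_norm_le_one [CompleteSpace E] {A P : E →L[𝕜] E}
    (hA : ‖A‖ ≤ 1) (hP : IsSelfAdjoint P) (h : A * P = P) : P * A = P := by
  have hadj : star A * P = P := by
    ext x
    exact adjoint_apply_eq_of_norm_le_one hA (congrArg (· x) h)
  simpa only [star_mul, star_star, hP.star_eq] using congrArg star hadj
end

theorem sub_pow_eq_pow_sub_of_mul_eq_self {R : Type*} [Ring R] {a p : R}
    (hap : a * p = p) (hpa : p * a = p) (hp : p * p = p) {n : ℕ} (hn : 1 ≤ n) :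
    (a - p) ^ n = a ^ n - p := by
  have hpow (k : ℕ) : a ^ k * p = p := by
    induction k with
    | zero => simp
    | succ k ih => rw [pow_succ, mul_assoc, hap, ih]
  induction n, hn using Nat.le_induction with
  | base => simp
  | succ n _ ih =>
    rw [pow_succ, ih, sub_mul, mul_sub, mul_sub, hpow, hpa, hp, ← pow_succ]
    abel

theorem abs_trace_pow_sub_trace_proj_le_general
    {H : Type*} [NormedAddCommGroup H] [InnerProductSpace ℂ H]
    [FiniteDimensional ℂ H] [CompleteSpace H]
    (P0 Ps : H →L[ℂ] H)
    (hP0sa : IsSelfAdjoint P0) (hP0proj : P0 * P0 = P0)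
    (hcomp : Ps * P0 = P0)
    (q : ℝ)
    (hPs : ‖Ps‖ ≤ 1) (hbound : ‖Ps * (1 - P0)‖ ≤ q)
    (T : ℕ) (hT : 1 ≤ T) :
    ‖LinearMap.trace ℂ H ((Ps ^ T : H →L[ℂ] H) : H →ₗ[ℂ] H) -
        LinearMap.trace ℂ H (P0 : H →ₗ[ℂ] H)‖ ≤
      q ^ T *
        (Module.finrank ℂ ↥(LinearMap.range ((1 - P0 : H →L[ℂ] H) : H →ₗ[ℂ] H)) : ℝ) := by
  have hP0Ps : P0 * Ps = P0 := ContinuousLinearMap.mul_eq_self_of_norm_le_one hPs hP0sa hcomp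
  have hpow : (Ps - P0) ^ T = Ps ^ T - P0 :=
    sub_pow_eq_pow_sub_of_mul_eq_self hcomp hP0Ps hP0proj hT
  have hnorm : ‖Ps ^ T - P0‖ ≤ q ^ T := by
    rw [← hpow, ← show Ps * (1 - P0) = Ps - P0 by rw [mul_sub, mul_one, hcomp]]
    exact (norm_pow_le' _ hT).trans (pow_le_pow_left₀ (norm_nonneg _) hbound T)
  -- `P0 (Ps - P0) = 0` since `P0 Ps = P0`.
  have hrange : LinearMap.range ((Ps ^ T - P0 : H →L[ℂ] H) : H →ₗ[ℂ] H) ≤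
      LinearMap.range ((1 - P0 : H →L[ℂ] H) : H →ₗ[ℂ] H) := by
    obtain ⟨k, rfl⟩ : ∃ k, T = k + 1 := ⟨T - 1, by omega⟩
    have hfactor : (1 - P0) * (Ps ^ (k + 1) - P0) = Ps ^ (k + 1) - P0 := by
      rw [sub_mul, one_mul, ← hpow, pow_succ', ← mul_assoc, mul_sub, hP0Ps, hP0proj, sub_self,
        zero_mul, sub_zero]
    rw [← hfactor, ContinuousLinearMap.toLinearMap_mul]
    exact LinearMap.range_comp_le_range _ _
  calc _ = ‖LinearMap.trace ℂ H ((Ps ^ T - P0 : H →L[ℂ] H) : H →ₗ[ℂ] H)‖ := by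
        rw [ContinuousLinearMap.toLinearMap_sub, map_sub]
    _ ≤ _ := (ContinuousLinearMap.norm_trace_le_of_range_le _ hrange).trans
        (mul_le_mul_of_nonneg_right hnorm (Nat.cast_nonneg _))

/-- Let `Π_0` be an orthogonal projector and `Π_⋆` an operator on a
finite-dimensional Hilbert space with `Π_⋆ Π_0 = Π_0`, `‖Π_⋆‖ ≤ 1`, and
`‖Π_⋆(I - Π_0)‖ ≤ q` for some `0 ≤ q ≤ 1`. Then for every positive integer `T`,
`|tr(Π_⋆^T) - tr(Π_0)| ≤ q^T · rank(I - Π_0)`. -/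
theorem abs_trace_pow_sub_trace_proj_le
    {H : Type*} [NormedAddCommGroup H] [InnerProductSpace ℂ H]
    [FiniteDimensional ℂ H] [CompleteSpace H]
    (P0 Ps : H →L[ℂ] H)
    (hP0sa : IsSelfAdjoint P0) (hP0proj : P0 * P0 = P0)
    (hcomp : Ps * P0 = P0)
    (q : ℝ) (hq0 : 0 ≤ q) (hq1 : q ≤ 1)
    (hPs : ‖Ps‖ ≤ 1) (hbound : ‖Ps * (1 - P0)‖ ≤ q)
    (T : ℕ) (hT : 1 ≤ T) :
    ‖LinearMap.trace ℂ H ((Ps ^ T : H →L[ℂ] H) : H →ₗ[ℂ] H) -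
        LinearMap.trace ℂ H (P0 : H →ₗ[ℂ] H)‖ ≤
      q ^ T *
        (Module.finrank ℂ ↥(LinearMap.range ((1 - P0 : H →L[ℂ] H) : H →ₗ[ℂ] H)) : ℝ) :=
  abs_trace_pow_sub_trace_proj_le_general P0 Ps hP0sa hP0proj hcomp q hPs hbound T hT
end

section
/- Under the hypotheses of the Kotecký–Preiss criterion with a(γ) = ((Δ+1)/(2Δ+1))|γ| and d(γ) = δ|γ|: if for every polymer γ* (a connected induced subgraph of a graph G of maximum degree at most Δ) the weights satisfy |w_γ| ≤ (e^{1+δ}(2Δ+1))^{−|γ|}, then ∑_{γ incompatible with γ*} |w_γ| e^{((Δ+1)/(2Δ+1)+δ)|γ|} ≤ ((Δ+1)/(2Δ+1))|γ*|. -/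
/-!
Each incompatible polymer contains a vertex of the closed neighbourhood of `γ*`, which has at
most `(Δ+1)|γ*|` vertices, and the weight bound turns each summand into `x^|γ|` with
`s = 1/(2Δ+1)` and `x = e^{-Δs} s`. It therefore suffices that the connected sets `S` through a
fixed vertex `u` satisfy `∑ x^|S| ≤ s`. This goes by induction on the ambient vertex set:
removing `u` splits `S` into components, each containing a neighbour of `u` and connected inside
the smaller ambient set, so the sum is at most `x (1+s)^Δ ≤ x e^{Δs} = s`.
-/

open Finset
open scoped Classical

lemma Finset.sum_le_sum_sum_of_forall_exists_mem {ι κ : Type*} {s : Finset ι} {t : Finset κ}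
    {r : κ → Finset ι} {f : ι → ℝ} (hf : ∀ i, 0 ≤ f i) (h : ∀ i ∈ s, ∃ k ∈ t, i ∈ r k) :
    ∑ i ∈ s, f i ≤ ∑ k ∈ t, ∑ i ∈ r k, f i := by
  calc ∑ i ∈ s, f i ≤ ∑ i ∈ s, ∑ k ∈ t, if i ∈ r k then f i else 0 := by
        refine sum_le_sum fun i hi => ?_
        obtain ⟨k, hk, hik⟩ := h i hi
        refine le_of_eq_of_le (if_pos hik).symm
          (single_le_sum (f := fun k => if i ∈ r k then f i else 0) (fun k _ => ?_) hk)
        split_ifs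
        exacts [hf i, le_rfl]
    _ = ∑ k ∈ t, ∑ i ∈ s with i ∈ r k, f i := by
        rw [sum_comm]
        simp only [sum_filter]
    _ ≤ ∑ k ∈ t, ∑ i ∈ r k, f i :=
        sum_le_sum fun k _ => sum_le_sum_of_subset_of_nonneg (fun i hi => (mem_filter.1 hi).2)
          fun i _ _ => hf i

lemma Real.exp_neg_mul_mul_mul_one_add_pow_le (n : ℕ) {s : ℝ} (hs : 0 ≤ s) :
    Real.exp (-(n * s)) * s * (1 + s) ^ n ≤ s := by
  calc Real.exp (-(n * s)) * s * (1 + s) ^ n ≤ Real.exp (-(n * s)) * s * Real.exp s ^ n := by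
        gcongr
        linarith [Real.add_one_le_exp s]
    _ = s := by
        rw [← Real.exp_nat_mul, mul_right_comm, ← Real.exp_add, neg_add_cancel, Real.exp_zero,
          one_mul]

lemma abs_mul_exp_le_pow {Δ k : ℕ} {δ c : ℝ}
    (hc : |c| ≤ ((Real.exp (1 + δ) * (2 * Δ + 1)) ^ k)⁻¹) :
    |c| * Real.exp ((((Δ : ℝ) + 1) / (2 * Δ + 1) + δ) * k) ≤
      (Real.exp (-(Δ * (2 * Δ + 1 : ℝ)⁻¹)) * (2 * Δ + 1 : ℝ)⁻¹) ^ k := by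
  have hbase : (Real.exp (1 + δ) * (2 * Δ + 1))⁻¹ * Real.exp (((Δ : ℝ) + 1) / (2 * Δ + 1) + δ) =
      Real.exp (-(Δ * (2 * Δ + 1 : ℝ)⁻¹)) * (2 * Δ + 1 : ℝ)⁻¹ := by
    have h : ((Δ : ℝ) + 1) / (2 * Δ + 1) + δ = (1 + δ) + -(Δ * (2 * Δ + 1 : ℝ)⁻¹) := by
      field_simp
      ring
    rw [h, Real.exp_add (1 + δ), mul_inv_rev, mul_assoc,
      inv_mul_cancel_left₀ (Real.exp_pos _).ne', mul_comm]
  calc |c| * Real.exp ((((Δ : ℝ) + 1) / (2 * Δ + 1) + δ) * k)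
      ≤ ((Real.exp (1 + δ) * (2 * Δ + 1)) ^ k)⁻¹ *
          Real.exp ((((Δ : ℝ) + 1) / (2 * Δ + 1) + δ) * k) := by
        gcongr
    _ = _ := by rw [mul_comm _ (k : ℝ), Real.exp_nat_mul, ← inv_pow, ← mul_pow, hbase]

namespace SimpleGraph

variable {V : Type*} (G : SimpleGraph V)

def ReachableIn (T : Finset V) (a b : V) : Prop :=
  ∃ p : G.Walk a b, ∀ x ∈ p.support, x ∈ T

variable {G}

namespace ReachableIn

variable {T : Finset V} {a b c : V}

lemma refl (ha : a ∈ T) : G.ReachableIn T a a := ⟨.nil, by simpa⟩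

lemma symm (h : G.ReachableIn T a b) : G.ReachableIn T b a :=
  let ⟨p, hp⟩ := h; ⟨p.reverse, by simpa using hp⟩

lemma trans (hab : G.ReachableIn T a b) (hbc : G.ReachableIn T b c) : G.ReachableIn T a c := by
  obtain ⟨p, hp⟩ := hab
  obtain ⟨q, hq⟩ := hbc
  refine ⟨p.append q, fun x hx => ?_⟩
  rcases Walk.mem_support_append_iff p q |>.1 hx with hx | hx
  exacts [hp x hx, hq x hx]

lemma right_mem (h : G.ReachableIn T a b) : b ∈ T :=
  let ⟨p, hp⟩ := h; hp b p.end_mem_support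

end ReachableIn

lemma connected_induce_iff_reachableIn {S : Finset V} :
    (G.induce (S : Set V)).Connected ↔ S.Nonempty ∧ ∀ a ∈ S, ∀ b ∈ S, G.ReachableIn S a b := by
  constructor
  · intro hS
    refine ⟨let ⟨⟨a, ha⟩⟩ := hS.nonempty; ⟨a, ha⟩, fun a ha b hb => ?_⟩
    obtain ⟨q⟩ := hS.preconnected ⟨a, ha⟩ ⟨b, hb⟩
    refine ⟨q.map (Embedding.induce _).toHom, fun x hx => ?_⟩
    obtain ⟨y, -, rfl⟩ := List.mem_map.1 ((Walk.support_map _ q) ▸ hx)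
    exact y.2
  · rintro ⟨⟨a, ha⟩, hS⟩
    refine G.induce_connected_of_patches a ha fun {b} hb => ?_
    obtain ⟨p, hp⟩ := hS a ha b hb
    exact ⟨{x | x ∈ p.support}, fun x hx => hp x hx, p.start_mem_support, p.end_mem_support,
      p.connected_induce_support.preconnected _ _⟩

-- The first edge of a path from `u` to `y` inside `S` leads into `S.erase u`.
lemma ReachableIn.exists_adj_of_connected {S : Finset V} (hS : (G.induce (S : Set V)).Connected)
    {u y : V} (hu : u ∈ S) (hy : y ∈ S) (hyu : y ≠ u) :
    ∃ v, G.Adj u v ∧ G.ReachableIn (S.erase u) v y := by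
  obtain ⟨p, hp⟩ := (connected_induce_iff_reachableIn.1 hS).2 u hu y hy
  have hpath := p.bypass_isPath
  have hsub := p.support_bypass_subset_support
  generalize p.bypass = q at hpath hsub
  cases q with
  | nil => exact absurd rfl hyu
  | cons hadj r =>
    obtain ⟨-, hur⟩ := (Walk.cons_isPath_iff hadj r).1 hpath
    refine ⟨_, hadj, r, fun x hx => mem_erase.2 ⟨?_, hp x (hsub (by simp [hx]))⟩⟩
    rintro rfl
    exact hur hx

variable (G) in
noncomputable def componentIn (T : Finset V) (v : V) : Finset V := {y ∈ T | G.ReachableIn T v y}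

variable {T : Finset V} {v w : V}

lemma mem_componentIn : w ∈ G.componentIn T v ↔ G.ReachableIn T v w := by
  simpa [componentIn] using fun h => h.right_mem

lemma componentIn_subset : G.componentIn T v ⊆ T := filter_subset _ _

lemma self_mem_componentIn (hv : v ∈ T) : v ∈ G.componentIn T v :=
  mem_componentIn.2 (.refl hv)

lemma componentIn_eq_of_mem (hw : w ∈ G.componentIn T v) :
    G.componentIn T w = G.componentIn T v := by
  ext y
  simp only [mem_componentIn] at hw ⊢
  exact ⟨hw.trans, hw.symm.trans⟩

lemma ReachableIn.to_componentIn (h : G.ReachableIn T v w) :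
    G.ReachableIn (G.componentIn T v) v w := by
  obtain ⟨p, hp⟩ := h
  refine ⟨p, fun x hx => mem_componentIn.2 ⟨p.takeUntil x hx, fun y hy => hp y ?_⟩⟩
  exact p.support_takeUntil_subset_support hx hy

lemma connected_induce_componentIn (hv : v ∈ T) :
    (G.induce (G.componentIn T v : Set V)).Connected := by
  refine connected_induce_iff_reachableIn.2 ⟨⟨v, self_mem_componentIn hv⟩, fun a ha b hb => ?_⟩
  exact (mem_componentIn.1 ha).to_componentIn.symm.trans (mem_componentIn.1 hb).to_componentIn

variable (G) in
noncomputable def branchRep (u : V) (C : Finset V) : V :=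
  if h : ∃ v ∈ C, G.Adj u v then h.choose else u

lemma branchRep_spec {u : V} {C : Finset V} (h : ∃ v ∈ C, G.Adj u v) :
    G.branchRep u C ∈ C ∧ G.Adj u (G.branchRep u C) := by
  rw [branchRep, dif_pos h]
  exact h.choose_spec

/- The branches of `S` at `u` are the components of `S.erase u`, each stored at one chosen
neighbour of `u` inside it (its `branchRep`); every other index carries `∅`. The fallback value
`u` of `branchRep` never satisfies the condition, since `u ∉ S.erase u`. -/
variable (G) in
noncomputable def branch (S : Finset V) (u v : V) : Finset V :=
  if v ∈ S.erase u ∧ G.branchRep u (G.componentIn (S.erase u) v) = v then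
    G.componentIn (S.erase u) v
  else ∅

variable {S : Finset V} {u : V}

lemma branch_subset : G.branch S u v ⊆ S.erase u := by
  unfold branch
  split_ifs
  exacts [componentIn_subset, empty_subset _]

lemma branch_eq_empty_or :
    G.branch S u v = ∅ ∨ G.Adj u v ∧ v ∈ G.branch S u v ∧
      (G.induce (G.branch S u v : Set V)).Connected := by
  by_cases h : v ∈ S.erase u ∧ G.branchRep u (G.componentIn (S.erase u) v) = v
  · rw [branch, if_pos h]
    obtain ⟨hv, hrep⟩ := h
    have hex : ∃ w ∈ G.componentIn (S.erase u) v, G.Adj u w := by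
      by_contra hex
      rw [branchRep, dif_neg hex] at hrep
      exact (mem_erase.1 hv).1 hrep.symm
    exact .inr ⟨hrep ▸ (branchRep_spec hex).2, self_mem_componentIn hv,
      connected_induce_componentIn hv⟩
  · exact .inl (by rw [branch, if_neg h])

lemma disjoint_branch (hvw : v ≠ w) : Disjoint (G.branch S u v) (G.branch S u w) := by
  refine Finset.disjoint_left.2 fun y hyv hyw => hvw ?_
  unfold branch at hyv hyw
  split_ifs at hyv hyw with hv hw
  · rw [← hv.2, ← hw.2, ← componentIn_eq_of_mem hyv, ← componentIn_eq_of_mem hyw]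
  all_goals simp only [notMem_empty] at hyv hyw

variable (G) in
noncomputable def rootedConnectedSets (A : Finset V) (u : V) : Finset (Finset V) :=
  {S ∈ A.powerset | u ∈ S ∧ (G.induce (S : Set V)).Connected}

lemma mem_rootedConnectedSets {A : Finset V} :
    S ∈ G.rootedConnectedSets A u ↔ S ⊆ A ∧ u ∈ S ∧ (G.induce (S : Set V)).Connected := by
  simp [rootedConnectedSets]

variable (G) in
noncomputable def branchChoices (A : Finset V) (u v : V) : Finset (Finset V) :=
  if G.Adj u v then insert ∅ (G.rootedConnectedSets (A.erase u) v) else {∅}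

lemma branch_mem_branchChoices {A : Finset V} (hSA : S ⊆ A) :
    G.branch S u v ∈ G.branchChoices A u v := by
  rcases branch_eq_empty_or (G := G) (S := S) (u := u) (v := v) with h | ⟨hadj, hv, hconn⟩
  · unfold branchChoices
    split_ifs <;> simp [h]
  · rw [branchChoices, if_pos hadj]
    exact mem_insert_of_mem (mem_rootedConnectedSets.2
      ⟨branch_subset.trans (erase_subset_erase u hSA), hv, hconn⟩)

variable [Fintype V]

lemma biUnion_branch (hS : (G.induce (S : Set V)).Connected) (hu : u ∈ S) :
    univ.biUnion (G.branch S u) = S.erase u := by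
  refine Subset.antisymm (biUnion_subset.2 fun v _ => branch_subset) fun y hy => ?_
  obtain ⟨v, hadj, hvy⟩ := ReachableIn.exists_adj_of_connected hS hu (mem_of_mem_erase hy)
    (ne_of_mem_erase hy)
  set C := G.componentIn (S.erase u) v
  have hvC : v ∈ C := self_mem_componentIn (hvy.symm.right_mem)
  obtain ⟨hrC, -⟩ := branchRep_spec ⟨v, hvC, hadj⟩
  have hCr : G.componentIn (S.erase u) (G.branchRep u C) = C := componentIn_eq_of_mem hrC
  refine mem_biUnion.2 ⟨G.branchRep u C, mem_univ _, ?_⟩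
  rw [branch, if_pos ⟨componentIn_subset hrC, by rw [hCr]⟩, hCr]
  exact mem_componentIn.2 hvy

lemma card_eq_sum_card_branch_add_one (hS : (G.induce (S : Set V)).Connected) (hu : u ∈ S) :
    #S = ∑ v, #(G.branch S u v) + 1 := by
  rw [← card_biUnion fun v _ w _ => disjoint_branch, biUnion_branch hS hu,
    card_erase_add_one hu]

lemma eq_insert_biUnion_branch (hS : (G.induce (S : Set V)).Connected) (hu : u ∈ S) :
    S = insert u (univ.biUnion (G.branch S u)) := by
  rw [biUnion_branch hS hu, insert_erase hu]

lemma sum_pow_card_rootedConnectedSets_le_sum_piFinset {x : ℝ} (hx : 0 ≤ x) (A : Finset V)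
    (u : V) : ∑ S ∈ G.rootedConnectedSets A u, x ^ #S ≤
      x * ∑ p ∈ Fintype.piFinset (G.branchChoices A u), ∏ v, x ^ #(p v) := by
  have hinj : Set.InjOn (G.branch · u) (G.rootedConnectedSets A u) := by
    intro S hS S' hS' h
    obtain ⟨-, hu, hconn⟩ := mem_rootedConnectedSets.1 hS
    obtain ⟨-, hu', hconn'⟩ := mem_rootedConnectedSets.1 hS'
    rw [eq_insert_biUnion_branch hconn hu, eq_insert_biUnion_branch hconn' hu']
    simp only at h
    rw [h]
  calc ∑ S ∈ G.rootedConnectedSets A u, x ^ #S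
      = ∑ S ∈ G.rootedConnectedSets A u, x * ∏ v, x ^ #(G.branch S u v) := by
        refine sum_congr rfl fun S hS => ?_
        obtain ⟨-, hu, hconn⟩ := mem_rootedConnectedSets.1 hS
        rw [prod_pow_eq_pow_sum, card_eq_sum_card_branch_add_one hconn hu, pow_succ, mul_comm]
    _ = ∑ p ∈ (G.rootedConnectedSets A u).image (G.branch · u), x * ∏ v, x ^ #(p v) := by
        rw [sum_image hinj]
    _ ≤ ∑ p ∈ Fintype.piFinset (G.branchChoices A u), x * ∏ v, x ^ #(p v) := by
        refine sum_le_sum_of_subset_of_nonneg (image_subset_iff.2 fun S hS => ?_)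
          fun _ _ _ => by positivity
        exact Fintype.mem_piFinset.2 fun v =>
          branch_mem_branchChoices (mem_rootedConnectedSets.1 hS).1
    _ = x * ∑ p ∈ Fintype.piFinset (G.branchChoices A u), ∏ v, x ^ #(p v) :=
        (mul_sum _ _ _).symm

lemma card_filter_adj_le {Δ : ℕ} (hdeg : ∀ v, (G.neighborSet v).ncard ≤ Δ) (v : V) :
    #{w | G.Adj v w} ≤ Δ := by
  rw [← Set.ncard_coe_finset]
  convert hdeg v
  ext
  simp

theorem sum_pow_card_rootedConnectedSets_le {Δ : ℕ} (hdeg : ∀ v, (G.neighborSet v).ncard ≤ Δ)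
    {x s : ℝ} (hx : 0 ≤ x) (hs : 0 ≤ s) (hxs : x * (1 + s) ^ Δ ≤ s) (A : Finset V) (u : V) :
    ∑ S ∈ G.rootedConnectedSets A u, x ^ #S ≤ s := by
  induction A using Finset.strongInduction generalizing u with
  | H A ih =>
  by_cases hu : u ∈ A
  swap
  · refine (sum_eq_zero fun S hS => absurd ?_ hu).trans_le hs
    obtain ⟨hSA, huS, -⟩ := mem_rootedConnectedSets.1 hS
    exact hSA huS
  have hfactor : ∀ v, ∑ C ∈ G.branchChoices A u v, x ^ #C ≤ if G.Adj u v then 1 + s else 1 := by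
    intro v
    unfold branchChoices
    split_ifs
    · rw [sum_insert fun h => by simpa using (mem_rootedConnectedSets.1 h).2.1, card_empty,
        pow_zero, add_le_add_iff_left]
      exact ih _ (erase_ssubset hu) v
    · simp
  calc ∑ S ∈ G.rootedConnectedSets A u, x ^ #S
      ≤ x * ∑ p ∈ Fintype.piFinset (G.branchChoices A u), ∏ v, x ^ #(p v) :=
        sum_pow_card_rootedConnectedSets_le_sum_piFinset hx A u
    _ = x * ∏ v, ∑ C ∈ G.branchChoices A u v, x ^ #C := by rw [prod_univ_sum]
    _ ≤ x * ∏ v, if G.Adj u v then 1 + s else 1 := by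
        gcongr with v
        exact hfactor v
    _ = x * (1 + s) ^ #{v | G.Adj u v} := by rw [prod_ite, prod_const, prod_const_one, mul_one]
    _ ≤ x * (1 + s) ^ Δ := by
        gcongr
        · linarith
        · exact card_filter_adj_le hdeg u
    _ ≤ s := hxs

variable (G) in
noncomputable def closedNeighborhood (B : Finset V) : Finset V :=
  B.biUnion fun b => insert b ({v | G.Adj b v} : Finset V)

lemma card_closedNeighborhood_le {Δ : ℕ} (hdeg : ∀ v, (G.neighborSet v).ncard ≤ Δ)
    (B : Finset V) : #(G.closedNeighborhood B) ≤ #B * (Δ + 1) :=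
  card_biUnion_le_card_mul _ _ _ fun b _ =>
    (card_insert_le _ _).trans (Nat.succ_le_succ (card_filter_adj_le hdeg b))

lemma exists_mem_closedNeighborhood {A B : Finset V}
    (h : ¬ Disjoint A B ∨ ∃ a ∈ A, ∃ b ∈ B, G.Adj a b) :
    ∃ u ∈ G.closedNeighborhood B, u ∈ A := by
  rcases h with h | ⟨a, ha, b, hb, hab⟩
  · obtain ⟨u, huA, huB⟩ := Finset.not_disjoint_iff.1 h
    exact ⟨u, mem_biUnion.2 ⟨u, huB, mem_insert_self _ _⟩, huA⟩
  · exact ⟨a, mem_biUnion.2 ⟨b, hb, mem_insert_of_mem (by simpa using hab.symm)⟩, ha⟩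

end SimpleGraph

open scoped Classical in
theorem kotecky_preiss_incompatibility_sum_general
    {V : Type*} [Fintype V] (G : SimpleGraph V)
    (Δ : ℕ) (hdeg : ∀ v, (G.neighborSet v).ncard ≤ Δ)
    (δ : ℝ) (w : Finset V → ℝ)
    (hw : ∀ γ : Finset V, γ.Nonempty → (G.induce (↑γ : Set V)).Connected →
      |w γ| ≤ ((Real.exp (1 + δ) * (2 * Δ + 1)) ^ γ.card)⁻¹)
    (γs : Finset V) :
    ∑ γ ∈ Finset.univ.filter (fun γ : Finset V =>
        γ.Nonempty ∧ (G.induce (↑γ : Set V)).Connected ∧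
        (¬ Disjoint γ γs ∨ ∃ a ∈ γ, ∃ b ∈ γs, G.Adj a b)),
      |w γ| * Real.exp ((((Δ : ℝ) + 1) / (2 * Δ + 1) + δ) * γ.card) ≤
      ((Δ : ℝ) + 1) / (2 * Δ + 1) * γs.card := by
  set T := Finset.univ.filter (fun γ : Finset V =>
    γ.Nonempty ∧ (G.induce (↑γ : Set V)).Connected ∧
    (¬ Disjoint γ γs ∨ ∃ a ∈ γ, ∃ b ∈ γs, G.Adj a b))
  set s : ℝ := (2 * Δ + 1)⁻¹ with hs_def
  have hs : 0 ≤ s := by positivity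
  set x : ℝ := Real.exp (-(Δ * s)) * s
  have hcover : ∀ γ ∈ T, ∃ u ∈ G.closedNeighborhood γs, γ ∈ G.rootedConnectedSets univ u := by
    intro γ hγ
    obtain ⟨-, hconn, hinc⟩ := (mem_filter.1 hγ).2
    obtain ⟨u, hu, huγ⟩ := G.exists_mem_closedNeighborhood hinc
    exact ⟨u, hu, SimpleGraph.mem_rootedConnectedSets.2 ⟨subset_univ γ, huγ, hconn⟩⟩
  calc ∑ γ ∈ T, |w γ| * Real.exp ((((Δ : ℝ) + 1) / (2 * Δ + 1) + δ) * #γ)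
      ≤ ∑ γ ∈ T, x ^ #γ := by
        refine sum_le_sum fun γ hγ => ?_
        obtain ⟨hne, hconn, -⟩ := (mem_filter.1 hγ).2
        exact abs_mul_exp_le_pow (hw γ hne hconn)
    _ ≤ ∑ u ∈ G.closedNeighborhood γs, ∑ γ ∈ G.rootedConnectedSets univ u, x ^ #γ :=
        sum_le_sum_sum_of_forall_exists_mem (fun _ => by positivity) hcover
    _ ≤ ∑ u ∈ G.closedNeighborhood γs, s := sum_le_sum fun u _ =>
        G.sum_pow_card_rootedConnectedSets_le hdeg (by positivity) hs
          (Real.exp_neg_mul_mul_mul_one_add_pow_le Δ hs) univ u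
    _ ≤ #γs * (Δ + 1) * s := by
        rw [sum_const, nsmul_eq_mul]
        gcongr
        exact_mod_cast G.card_closedNeighborhood_le hdeg γs
    _ = ((Δ : ℝ) + 1) / (2 * Δ + 1) * #γs := by
        rw [hs_def]
        field_simp

open scoped Classical in
/-- Kotecký–Preiss type bound with `a(γ) = ((Δ+1)/(2Δ+1))|γ|` and `d(γ) = δ|γ|`:
if every polymer (nonempty vertex subset inducing a connected subgraph of a
graph `G` of maximum degree at most `Δ`) has weight satisfying
`|w_γ| ≤ (e^{1+δ}(2Δ+1))^{-|γ|}`, then for every polymer `γ*`,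
`∑_{γ ≁ γ*} |w_γ| e^{((Δ+1)/(2Δ+1)+δ)|γ|} ≤ ((Δ+1)/(2Δ+1))|γ*|`,
where `γ ≁ γ*` means `γ` intersects `γ*` or some edge of `G` joins them. -/
theorem kotecky_preiss_incompatibility_sum
    {V : Type*} [Fintype V] (G : SimpleGraph V)
    (Δ : ℕ) (hΔ : 2 ≤ Δ) (hdeg : ∀ v, (G.neighborSet v).ncard ≤ Δ)
    (δ : ℝ) (hδ : 0 < δ) (w : Finset V → ℝ)
    (hw : ∀ γ : Finset V, γ.Nonempty → (G.induce (↑γ : Set V)).Connected →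
      |w γ| ≤ ((Real.exp (1 + δ) * (2 * Δ + 1)) ^ γ.card)⁻¹)
    (γs : Finset V) (hγs : γs.Nonempty) (hγsconn : (G.induce (↑γs : Set V)).Connected) :
    ∑ γ ∈ Finset.univ.filter (fun γ : Finset V =>
        γ.Nonempty ∧ (G.induce (↑γ : Set V)).Connected ∧
        (¬ Disjoint γ γs ∨ ∃ a ∈ γ, ∃ b ∈ γs, G.Adj a b)),
      |w γ| * Real.exp ((((Δ : ℝ) + 1) / (2 * Δ + 1) + δ) * γ.card) ≤
      ((Δ : ℝ) + 1) / (2 * Δ + 1) * γs.card :=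
  kotecky_preiss_incompatibility_sum_general G Δ hdeg δ w hw γs
end
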